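/- Let d ≥ 1, let 0 < r < π/4, let p₀ ∈ S^d, and let x, y, z ∈ B_r(p₀). Then ρ(x, z)² ≤ ρ(y, z)² − 2·⟨log_y z, log_y x⟩ + ρ(y, x)². -/

import Mathlib

/-- Geodesic distance on the unit sphere `S^d ⊂ ℝ^(d+1)`: `ρ(p,q) = arccos ⟨p,q⟩`. -/
noncomputable def sphDist {d : ℕ} (p q : EuclideanSpace ℝ (Fin (d + 1))) : ℝ :=
  Real.arccos (inner ℝ p q)

/-- Inverse exponential (log) map on the unit sphere:
`log_p q = (θ / sin θ) (q - cos θ • p)` with `θ = ρ(p,q)` (and `log_p p = 0`). -/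
noncomputable def sphLog {d : ℕ} (p q : EuclideanSpace ℝ (Fin (d + 1))) :
    EuclideanSpace ℝ (Fin (d + 1)) :=
  (sphDist p q / Real.sin (sphDist p q)) • (q - Real.cos (sphDist p q) • p)

/-!
Write `a = ρ(y,z)`, `b = ρ(y,x)`, `c = ρ(x,z)` and let `γ` be the angle at `y` between the
geodesics towards `z` and `x`. Then `⟨log_y z, log_y x⟩ = ab cos γ`, so the right hand side is the
squared third side `a² + b² - 2ab cos γ` of the Euclidean comparison triangle, while the spherical
law of cosines gives `cos c = cos a cos b + sin a sin b cos γ`. As `w ↦ cos √w` is convex on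
`[0, π²]` and `a² + b² - 2ab cos γ` is the convex combination of `(a - b)²` and `(a + b)²` with
weights `(1 ± cos γ)/2`, the comparison side has cosine at most `cos c`. In a ball of radius `π/4`
we have `a + b < π`, so both sides lie in `[0, π]`, where `cos` is decreasing.
-/

open Real InnerProductGeometry Set

namespace Real

theorem mul_cos_le_sin {s : ℝ} (h0 : 0 ≤ s) (hπ : s ≤ π) : s * cos s ≤ sin s := by
  rcases lt_or_ge s (π / 2) with hs | hs
  · rcases h0.eq_or_lt with rfl | h0
    · simp
    have hcos : 0 < cos s := cos_pos_of_mem_Ioo ⟨by linarith [pi_pos], hs⟩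
    calc s * cos s ≤ tan s * cos s := by gcongr; exact (lt_tan h0 hs).le
      _ = sin s := by rw [tan_eq_sin_div_cos, div_mul_cancel₀ _ hcos.ne']
  · have hcos : cos s ≤ 0 := cos_nonpos_of_pi_div_two_le_of_le hs (by linarith [pi_pos])
    nlinarith [sin_nonneg_of_nonneg_of_le_pi h0 hπ]

theorem div_sin_mul_sin {a : ℝ} (h0 : 0 ≤ a) (hπ : a < π) : a / sin a * sin a = a := by
  rcases h0.eq_or_lt with rfl | h0
  · simp
  · exact div_mul_cancel₀ _ (sin_pos_of_pos_of_lt_pi h0 hπ).ne'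

theorem convexOn_cos_sqrt : ConvexOn ℝ (Icc 0 (π ^ 2)) (fun w => cos √w) := by
  refine convexOn_of_hasDerivWithinAt2_nonneg (convex_Icc _ _)
    (f' := fun w => -(sin √w / (2 * √w)))
    (f'' := fun w => (sin √w / √w - cos √w) / (4 * w))
    (continuous_cos.comp continuous_sqrt).continuousOn ?_ ?_ ?_ <;>
    intro w hw <;> rw [interior_Icc] at hw
  · refine (hasDerivAt_sqrt hw.1.ne').cos.hasDerivWithinAt.congr_deriv ?_
    field_simp
  · have hu : 0 < √w := sqrt_pos.mpr hw.1
    have hsqrt := hasDerivAt_sqrt hw.1.ne'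
    refine (hsqrt.sin.div (hsqrt.const_mul 2)
      (by positivity)).neg.hasDerivWithinAt.congr_deriv ?_
    set u := √w
    rw [show w = u ^ 2 from (sq_sqrt hw.1.le).symm]
    field_simp
    ring
  · have hu : 0 < √w := sqrt_pos.mpr hw.1
    have hle : √w * cos √w ≤ sin √w :=
      mul_cos_le_sin hu.le ((sqrt_le_left pi_pos.le).mpr hw.2.le)
    have : 0 ≤ sin √w / √w - cos √w := by
      rw [sub_nonneg, le_div_iff₀ hu, mul_comm]
      exact hle
    have hw₀ : 0 < w := hw.1
    positivity

theorem cos_sqrt_le_cos_mul_cos_add {a b t : ℝ} (ha : 0 ≤ a) (hb : 0 ≤ b) (hab : a + b ≤ π)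
    (ht : |t| ≤ 1) :
    cos √(a ^ 2 + b ^ 2 - 2 * a * b * t) ≤ cos a * cos b + sin a * sin b * t := by
  obtain ⟨ht₁, ht₂⟩ := abs_le.mp ht
  have hmem : ∀ s, |s| ≤ a + b → s ^ 2 ∈ Icc 0 (π ^ 2) := fun s hs =>
    ⟨sq_nonneg s, sq_le_sq' (by linarith [neg_abs_le s]) (by linarith [le_abs_self s])⟩
  have key := convexOn_cos_sqrt.2 (hmem (a - b) (abs_sub_le_of_nonneg_of_le ha (by linarith)
      hb (by linarith))) (hmem (a + b) (abs_of_nonneg (by linarith)).le)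
    (show 0 ≤ (1 + t) / 2 by linarith) (show 0 ≤ (1 - t) / 2 by linarith) (by ring)
  simp only [smul_eq_mul, sqrt_sq_eq_abs, cos_abs, cos_sub, cos_add] at key
  rw [show a ^ 2 + b ^ 2 - 2 * a * b * t = (1 + t) / 2 * (a - b) ^ 2 + (1 - t) / 2 * (a + b) ^ 2
    by ring]
  exact key.trans_eq (by ring)

theorem sq_le_of_cos_eq_cos_mul_cos_add {a b c t : ℝ} (ha : 0 ≤ a) (hb : 0 ≤ b) (hab : a + b ≤ π)
    (ht : |t| ≤ 1) (hc₀ : 0 ≤ c) (hcπ : c ≤ π)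
    (hc : cos c = cos a * cos b + sin a * sin b * t) :
    c ^ 2 ≤ a ^ 2 + b ^ 2 - 2 * a * b * t := by
  obtain ⟨ht₁, ht₂⟩ := abs_le.mp ht
  have hw₀ : 0 ≤ a ^ 2 + b ^ 2 - 2 * a * b * t := by nlinarith [sq_nonneg (a - b), mul_nonneg ha hb]
  have hwπ : √(a ^ 2 + b ^ 2 - 2 * a * b * t) ≤ π := by
    refine (sqrt_le_left pi_pos.le).mpr ?_
    nlinarith [mul_nonneg ha hb]
  rw [← le_sqrt hc₀ hw₀]
  exact (strictAntiOn_cos.le_iff_ge ⟨sqrt_nonneg _, hwπ⟩ ⟨hc₀, hcπ⟩).mp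
    (hc ▸ cos_sqrt_le_cos_mul_cos_add ha hb hab ht)

end Real

section Sphere

variable {d : ℕ} {p q x y z : EuclideanSpace ℝ (Fin (d + 1))}

theorem sphDist_comm (p q : EuclideanSpace ℝ (Fin (d + 1))) : sphDist p q = sphDist q p := by
  rw [sphDist, sphDist, real_inner_comm]

theorem sphDist_nonneg (p q : EuclideanSpace ℝ (Fin (d + 1))) : 0 ≤ sphDist p q :=
  arccos_nonneg _

theorem sin_sphDist_nonneg (p q : EuclideanSpace ℝ (Fin (d + 1))) : 0 ≤ sin (sphDist p q) :=
  sin_nonneg_of_nonneg_of_le_pi (arccos_nonneg _) (arccos_le_pi _)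

theorem sphDist_eq_angle (hp : ‖p‖ = 1) (hq : ‖q‖ = 1) : sphDist p q = angle p q := by
  simp [sphDist, angle, hp, hq]

theorem cos_sphDist (hp : ‖p‖ = 1) (hq : ‖q‖ = 1) : cos (sphDist p q) = inner ℝ p q := by
  simp [sphDist_eq_angle hp hq, cos_angle, hp, hq]

theorem sphDist_le_sphDist_add_sphDist (hp : ‖p‖ = 1) (hq : ‖q‖ = 1) (hx : ‖x‖ = 1) :
    sphDist p x ≤ sphDist p q + sphDist q x := by
  simpa only [sphDist_eq_angle, hp, hq, hx] using angle_le_angle_add_angle p q x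

theorem norm_sub_cos_sphDist_smul (hp : ‖p‖ = 1) (hq : ‖q‖ = 1) :
    ‖q - cos (sphDist p q) • p‖ = sin (sphDist p q) := by
  refine (sq_eq_sq₀ (norm_nonneg _) (sin_sphDist_nonneg p q)).mp ?_
  rw [norm_sub_sq_real, norm_smul, real_inner_smul_right, sin_sq, cos_sphDist hp hq,
    real_inner_comm q p, mul_pow, norm_eq_abs, sq_abs, hp, hq]
  ring

/-- The angle at `y` of the geodesic triangle `y z x`, between the initial velocities of the
geodesics from `y` to `z` and to `x`. -/
noncomputable def sphAngle (y z x : EuclideanSpace ℝ (Fin (d + 1))) : ℝ :=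
  angle (z - cos (sphDist y z) • y) (x - cos (sphDist y x) • y)

theorem cos_sphDist_eq_cos_mul_cos_add (hx : ‖x‖ = 1) (hy : ‖y‖ = 1) (hz : ‖z‖ = 1) :
    cos (sphDist x z) = cos (sphDist y z) * cos (sphDist y x) +
      sin (sphDist y z) * sin (sphDist y x) * cos (sphAngle y z x) := by
  have hγ : sin (sphDist y z) * sin (sphDist y x) * cos (sphAngle y z x) =
      inner ℝ (z - cos (sphDist y z) • y) (x - cos (sphDist y x) • y) := by
    rw [sphAngle, ← norm_sub_cos_sphDist_smul hy hz, ← norm_sub_cos_sphDist_smul hy hx, mul_comm]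
    exact cos_angle_mul_norm_mul_norm _ _
  rw [hγ, cos_sphDist hx hz, cos_sphDist hy hz, cos_sphDist hy hx]
  simp only [inner_sub_left, inner_sub_right, real_inner_smul_left, real_inner_smul_right,
    real_inner_self_eq_norm_sq, hy, real_inner_comm x z, real_inner_comm y z]
  ring

theorem inner_sphLog_sphLog (hx : ‖x‖ = 1) (hy : ‖y‖ = 1) (hz : ‖z‖ = 1)
    (hyz : sphDist y z < π) (hyx : sphDist y x < π) :
    inner ℝ (sphLog y z) (sphLog y x) = sphDist y z * sphDist y x * cos (sphAngle y z x) := by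
  have h := cos_angle_mul_norm_mul_norm (z - cos (sphDist y z) • y) (x - cos (sphDist y x) • y)
  rw [norm_sub_cos_sphDist_smul hy hz, norm_sub_cos_sphDist_smul hy hx] at h
  rw [sphLog, sphLog, real_inner_smul_left, real_inner_smul_right, ← h, ← sphAngle]
  calc _ = sphDist y z / sin (sphDist y z) * sin (sphDist y z) *
        (sphDist y x / sin (sphDist y x) * sin (sphDist y x)) * cos (sphAngle y z x) := by ring
    _ = _ := by rw [div_sin_mul_sin (sphDist_nonneg y z) hyz,
        div_sin_mul_sin (sphDist_nonneg y x) hyx]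

end Sphere

theorem sphere_dist_sq_smoothness_general (d : ℕ)
    (r : ℝ) (hr : r < Real.pi / 4)
    (p₀ : EuclideanSpace ℝ (Fin (d + 1))) (hp₀ : ‖p₀‖ = 1)
    (x y z : EuclideanSpace ℝ (Fin (d + 1)))
    (hx : ‖x‖ = 1 ∧ sphDist p₀ x < r)
    (hy : ‖y‖ = 1 ∧ sphDist p₀ y < r)
    (hz : ‖z‖ = 1 ∧ sphDist p₀ z < r) :
    sphDist x z ^ 2 ≤
      sphDist y z ^ 2 - 2 * (inner ℝ (sphLog y z) (sphLog y x) : ℝ) +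
        sphDist y x ^ 2 := by
  obtain ⟨hx, hxr⟩ := hx
  obtain ⟨hy, hyr⟩ := hy
  obtain ⟨hz, hzr⟩ := hz
  have hyz := sphDist_le_sphDist_add_sphDist hy hp₀ hz
  have hyx := sphDist_le_sphDist_add_sphDist hy hp₀ hx
  rw [sphDist_comm y p₀] at hyz hyx
  have hsum : sphDist y z + sphDist y x < π := by linarith
  have hz₀ := sphDist_nonneg y z
  have hx₀ := sphDist_nonneg y x
  rw [inner_sphLog_sphLog hx hy hz (by linarith) (by linarith)]
  have := sq_le_of_cos_eq_cos_mul_cos_add hz₀ hx₀ hsum.le (abs_cos_le_one _) (sphDist_nonneg x z)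
    (arccos_le_pi _) (cos_sphDist_eq_cos_mul_cos_add hx hy hz)
  linarith

/-- Geodesic smoothness (Lipschitz-gradient) inequality for the squared distance on
the unit sphere with parameter `h_min(2r,1) = 1`: for `x, y, z` in a geodesic ball
of radius `r < π/4`, `ρ(x,z)² ≤ ρ(y,z)² − 2⟨log_y z, log_y x⟩ + ρ(y,x)²`. -/
theorem sphere_dist_sq_smoothness (d : ℕ) (hd : 1 ≤ d)
    (r : ℝ) (hr0 : 0 < r) (hr : r < Real.pi / 4)
    (p₀ : EuclideanSpace ℝ (Fin (d + 1))) (hp₀ : ‖p₀‖ = 1)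
    (x y z : EuclideanSpace ℝ (Fin (d + 1)))
    (hx : ‖x‖ = 1 ∧ sphDist p₀ x < r)
    (hy : ‖y‖ = 1 ∧ sphDist p₀ y < r)
    (hz : ‖z‖ = 1 ∧ sphDist p₀ z < r) :
    sphDist x z ^ 2 ≤
      sphDist y z ^ 2 - 2 * (inner ℝ (sphLog y z) (sphLog y x) : ℝ) +
        sphDist y x ^ 2 :=
  sphere_dist_sq_smoothness_general d r hr p₀ hp₀ x y z hx hy hz
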